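/- With n = 2m and Δ_n := ∑_{k=0}^{n−1} (n−k)(k+1) x_{k+1} ∂/∂x_k on R_n, for 0 ≤ i ≤ m one has π_{m,n}(Δ_n^m(x_i x_{m−i})) = C(m, m−i) · x_0^2 · ((n−i)!/i!) · ((m+i)!/(m−i)!). -/

import Mathlib

/-! Since `Δw` is a derivation, the general Leibniz rule expands `Δ^m (x_i x_{m-i})` as
`∑_{p+q=m} C(m,p) Δ^p x_i · Δ^q x_{m-i}`. Each `Δ^j x_a` is a scalar multiple of `x_{a+j}`, with
coefficient `(n-a)(n-a-1)⋯ · (a+1)(a+2)⋯` (descending and ascending factorials of length `j`),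
and `π` kills every `x_k` with `k < m`. Hence only `p = m - i`, `q = i` survives, and both
factors land on `x_0`. -/

open MvPolynomial Finset

open Fin.NatCast

noncomputable def Dw (K : Type) [CommRing K] (n : ℕ) :
    Derivation K (MvPolynomial (Fin (n + 1)) K) (MvPolynomial (Fin (n + 1)) K) :=
  MvPolynomial.mkDerivation K fun i =>
    if i.1 = 0 then 0 else
      MvPolynomial.X ⟨i.1 - 1, Nat.lt_of_le_of_lt (Nat.sub_le _ _) i.isLt⟩

noncomputable def piHom (K : Type) [CommRing K] (m n : ℕ) :
    MvPolynomial (Fin (n + 1)) K →ₐ[K] MvPolynomial (Fin (m + 1)) K :=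
  MvPolynomial.aeval fun i : Fin (n + 1) =>
    if i.1 < n - m then 0 else MvPolynomial.X ((i.1 - (n - m) : ℕ) : Fin (m + 1))

noncomputable def Δw (K : Type) [CommRing K] (n : ℕ) :
    Derivation K (MvPolynomial (Fin (n + 1)) K) (MvPolynomial (Fin (n + 1)) K) :=
  MvPolynomial.mkDerivation K fun k =>
    (((n - k.1) * (k.1 + 1) : ℕ) : K) •
      if h : k.1 < n then MvPolynomial.X ⟨k.1 + 1, Nat.succ_lt_succ h⟩ else 0

open Function
open scoped Nat

theorem Derivation.iterate_map_mul {R A : Type*} [CommSemiring R] [CommSemiring A] [Algebra R A]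
    (D : Derivation R A A) (n : ℕ) (a b : A) :
    (⇑D)^[n] (a * b) =
      ∑ ij ∈ antidiagonal n, n.choose ij.1 • ((⇑D)^[ij.1] a * (⇑D)^[ij.2] b) := by
  induction n with
  | zero => simp
  | succ n ih =>
    rw [sum_antidiagonal_choose_succ_nsmul (fun i j => (⇑D)^[i] a * (⇑D)^[j] b) n]
    simp only [iterate_succ_apply', ih, map_sum, map_nsmul, Derivation.leibniz, smul_eq_mul,
      smul_add, sum_add_distrib]
    congr 1
    refine sum_congr rfl fun ij hij => ?_
    rw [n.choose_symm_of_eq_add (mem_antidiagonal.1 hij).symm, mul_comm]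

theorem Δw_X (K : Type) [CommRing K] {n a : ℕ} (ha : a < n) :
    Δw K n (X (a : Fin (n + 1))) =
      (((n - a) * (a + 1) : ℕ) : K) • X ((a + 1 : ℕ) : Fin (n + 1)) := by
  have hval : ((a : Fin (n + 1)) : ℕ) = a := Fin.val_cast_of_lt (by omega)
  simp only [Δw, mkDerivation_X, hval, dif_pos ha]
  congr
  exact (Nat.mod_eq_of_lt (by omega)).symm

theorem Δw_iterate_X (K : Type) [CommRing K] {n a j : ℕ} (h : a + j ≤ n) :
    (⇑(Δw K n))^[j] (X (a : Fin (n + 1))) =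
      (((n - a).descFactorial j * (a + 1).ascFactorial j : ℕ) : K) •
        X ((a + j : ℕ) : Fin (n + 1)) := by
  induction j with
  | zero => simp
  | succ j ih =>
    rw [iterate_succ_apply', ih (by omega), Derivation.map_smul, Δw_X K (by omega), smul_smul,
      ← Nat.cast_mul, Nat.descFactorial_succ, Nat.ascFactorial_succ, Nat.sub_sub, add_assoc]
    congr 2
    ring

theorem piHom_X (K : Type) [CommRing K] {m n t : ℕ} (ht : t ≤ n) :
    piHom K m n (X (t : Fin (n + 1))) =
      if t < n - m then 0 else X ((t - (n - m) : ℕ) : Fin (m + 1)) := by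
  rw [piHom, aeval_X, Fin.val_cast_of_lt (by omega)]

theorem piHom_Δw_iterate_X (K : Type) [CommRing K] {m n a j : ℕ} (h : a + j ≤ n) :
    piHom K m n ((⇑(Δw K n))^[j] (X (a : Fin (n + 1)))) =
      (((n - a).descFactorial j * (a + 1).ascFactorial j : ℕ) : K) •
        if a + j < n - m then 0 else X ((a + j - (n - m) : ℕ) : Fin (m + 1)) := by
  rw [Δw_iterate_X K h, map_smul, piHom_X K h]

theorem cast_descFactorial_mul_ascFactorial (K : Type) [Field K] [CharZero K] {n a j : ℕ}
    (h : a + j ≤ n) :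
    (((n - a).descFactorial j * (a + 1).ascFactorial j : ℕ) : K) =
      (n - a)! / (n - (a + j))! * ((a + j)! / a !) := by
  have hdesc : ((n - a).descFactorial j : K) = (n - a)! / (n - (a + j))! := by
    rw [eq_div_iff (Nat.cast_ne_zero.2 (Nat.factorial_ne_zero _)), ← Nat.sub_sub, mul_comm]
    exact_mod_cast Nat.factorial_mul_descFactorial (by omega)
  have hasc : ((a + 1).ascFactorial j : K) = (a + j)! / a ! := by
    rw [eq_div_iff (Nat.cast_ne_zero.2 (Nat.factorial_ne_zero _)), mul_comm]
    exact_mod_cast Nat.factorial_mul_ascFactorial a j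
  push_cast
  rw [hdesc, hasc]

theorem piHom_Δw_iterate_X_of_lt (K : Type) [CommRing K] {m n a j : ℕ} (h : a + j < n - m) :
    piHom K m n ((⇑(Δw K n))^[j] (X (a : Fin (n + 1)))) = 0 := by
  rw [piHom_Δw_iterate_X K (by omega), if_pos h, smul_zero]

theorem piHom_Δw_iterate_X_of_add_eq (K : Type) [Field K] [CharZero K] {m n a j : ℕ}
    (hmn : m ≤ n) (h : a + j = n - m) :
    piHom K m n ((⇑(Δw K n))^[j] (X (a : Fin (n + 1)))) =
      ((n - a)! / m ! * ((n - m)! / a !) : K) • X ((0 : ℕ) : Fin (m + 1)) := by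
  rw [piHom_Δw_iterate_X K (by omega), if_neg (by omega), h, Nat.sub_self,
    cast_descFactorial_mul_ascFactorial K (by omega), h, Nat.sub_sub_self hmn]

theorem stmt13 (K : Type) [Field K] [CharZero K] (m i : ℕ) (hi : i ≤ m) :
    piHom K m (2 * m)
        ((⇑(Δw K (2 * m)))^[m]
          (X ((i : ℕ) : Fin (2 * m + 1)) * X ((m - i : ℕ) : Fin (2 * m + 1))))
      = MvPolynomial.C ((m.choose (m - i) : K) *
            (((2 * m - i).factorial : K) / (i.factorial : K)) *
            (((m + i).factorial : K) / ((m - i).factorial : K))) *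
          X ((0 : ℕ) : Fin (m + 1)) ^ 2 := by
  have hm : 2 * m - m = m := by omega
  rw [Derivation.iterate_map_mul, map_sum,
    sum_eq_single_of_mem (m - i, i) (HasAntidiagonal.mem_antidiagonal.2 (by omega))]
  · rw [map_nsmul, map_mul, piHom_Δw_iterate_X_of_add_eq K (by omega) (by omega),
      piHom_Δw_iterate_X_of_add_eq K (by omega) (by omega), smul_mul_smul_comm, ← sq,
      ← Nat.cast_smul_eq_nsmul K, smul_smul, smul_eq_C_mul, hm,
      show 2 * m - (m - i) = m + i by omega]
    have hfact (k : ℕ) : (k ! : K) ≠ 0 := Nat.cast_ne_zero.2 k.factorial_ne_zero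
    rw [div_mul_div_cancel₀ (hfact m), div_mul_div_cancel₀ (hfact m), mul_assoc]
  · rintro ⟨p, q⟩ hpq hne
    rw [HasAntidiagonal.mem_antidiagonal] at hpq
    obtain hp | hq : p < m - i ∨ q < i := by
      by_contra! h
      exact hne (by rw [Prod.mk.injEq]; omega)
    · rw [map_nsmul, map_mul, piHom_Δw_iterate_X_of_lt K (show i + p < 2 * m - m by omega),
        zero_mul, smul_zero]
    · rw [map_nsmul, map_mul, piHom_Δw_iterate_X_of_lt K (show m - i + q < 2 * m - m by omega),
        mul_zero, smul_zero]
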